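/- Under the model assumptions (A1)–(A5), (τ_2(n) − τ_1(n))/c_n converges to 0 almost surely as n → ∞, where τ_1(n) = inf{k ≥ 1 : T_{k−1} + η_k ≥ c_n} and τ_2(n) = inf{k ≥ 1 : T_k = c_n}. -/

import Mathlib

open MeasureTheory ProbabilityTheory Filter Finset Asymptotics Topology

noncomputable section

namespace ABTest

variable {Ω : Type*}

/-- The Bernoulli law on `ℕ` with success probability `r`. -/
def bern (r : ℝ) : Measure ℕ :=
  ENNReal.ofReal r • Measure.dirac 1 + ENNReal.ofReal (1 - r) • Measure.dirac 0

/-- The joint law of `(I_k, (ξ_k, η_k))`: given `I_k = i`, the pair `(ξ_k, η_k)` has law `μ_i`. -/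
def mixLaw (p : ℝ) (μ0 μ1 : Measure (ℕ × ℕ)) : Measure (ℕ × ℕ × ℕ) :=
  ENNReal.ofReal p • (Measure.dirac 1).prod μ1 +
    ENNReal.ofReal (1 - p) • (Measure.dirac 0).prod μ0

/-- The 2-dimensional random walk `R_k = (S_k, T_k)` in the semi-infinite strip of height `c`.
Step `k` (from `R_{k-1}` to `R_k`) uses the random variables with index `k`. -/
def walk (ξ η θ J : ℕ → Ω → ℕ) (c : ℕ) : ℕ → Ω → ℕ × ℕ
  | 0, _ => (0, 0)
  | k + 1, ω =>
    let R := walk ξ η θ J c k ω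
    if R.2 = c then (R.1 + θ (k + 1) ω, R.2)
    else if R.2 + η (k + 1) ω ≤ c then (R.1 + ξ (k + 1) ω, R.2 + η (k + 1) ω)
    else if J (k + 1) ω = 1 then (R.1 + ξ (k + 1) ω, c)
    else R

/-- `N_n^{(i)}`, the number of visitors in group `i` among the first `n` visitors. -/
def Ni (I : ℕ → Ω → ℕ) (i n : ℕ) (ω : Ω) : ℕ :=
  ∑ k ∈ Finset.Icc 1 n, if I k ω = i then 1 else 0

/-- `L_n^{(i)}`, the number of purchases (`X_k + Y_k > 0`) in group `i` among the first `n`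
visitors, when the capacity of the popular good is `c`. -/
def Li (I J ξ η θ : ℕ → Ω → ℕ) (c i n : ℕ) (ω : Ω) : ℕ :=
  ∑ k ∈ Finset.Icc 1 n,
    if (walk ξ η θ J c (k - 1) ω).1 + (walk ξ η θ J c (k - 1) ω).2
        < (walk ξ η θ J c k ω).1 + (walk ξ η θ J c k ω).2 ∧ I k ω = i
    then 1 else 0

/-- The chi-squared statistic associated with the contingency table of the first `n` visitors. -/
def chiSq (I J ξ η θ : ℕ → Ω → ℕ) (c n : ℕ) (ω : Ω) : ℝ :=
  let N0 : ℝ := (Ni I 0 n ω : ℝ)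
  let N1 : ℝ := (Ni I 1 n ω : ℝ)
  let L0 : ℝ := (Li I J ξ η θ c 0 n ω : ℝ)
  let L1 : ℝ := (Li I J ξ η θ c 1 n ω : ℝ)
  let L : ℝ := L0 + L1
  ((L0 - L * N0 / (n : ℝ)) ^ 2 / (L * N0 / (n : ℝ)) +
      (L1 - L * N1 / (n : ℝ)) ^ 2 / (L * N1 / (n : ℝ))) +
    ((N0 - L0 - ((n : ℝ) - L) * N0 / (n : ℝ)) ^ 2 / (((n : ℝ) - L) * N0 / (n : ℝ)) +
      (N1 - L1 - ((n : ℝ) - L) * N1 / (n : ℝ)) ^ 2 / (((n : ℝ) - L) * N1 / (n : ℝ)))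

/-- `p_i = μ_i({(0,0)}ᶜ)`, the theoretical conversion rate of law `μ`. -/
def pSale (μ : Measure (ℕ × ℕ)) : ℝ := 1 - (μ {(0, 0)}).toReal

/-- `m^ξ`, the mean of the first coordinate under `μ`. -/
def mXi (μ : Measure (ℕ × ℕ)) : ℝ := ∫ x, (x.1 : ℝ) ∂μ

/-- `m^η`, the mean of the second coordinate under `μ`. -/
def mEta (μ : Measure (ℕ × ℕ)) : ℝ := ∫ x, (x.2 : ℝ) ∂μ

/-- `p_θ = ν({m : 0 < m})`, the conversion rate after sell-out. -/
def pTheta (ν : Measure ℕ) : ℝ := (ν {m | 0 < m}).toReal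

/-- `m^η = p m_1^η + (1-p) m_0^η`. -/
def mEtaBar (p : ℝ) (μ0 μ1 : Measure (ℕ × ℕ)) : ℝ := p * mEta μ1 + (1 - p) * mEta μ0

/-- Model assumptions (A1)–(A5): the sequence `((I_k, ξ_k, η_k), J_k, θ_k)_{k ≥ 0}` is i.i.d.;
within one index, `(I_k, (ξ_k, η_k))`, `J_k` and `θ_k` are independent with respective laws
`mixLaw p μ0 μ1` (i.e. `I_k` is Bernoulli(`p`) and conditionally on `I_k = i` the vector
`(ξ_k, η_k)` has law `μ_i`), Bernoulli(`q`) and `ν`; the laws `μ_0, μ_1` charge every point of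
`{0,1}²`, and all variables have finite second moments. -/
structure IsModel {Ω : Type*} [MeasurableSpace Ω] (P : Measure Ω) (p q : ℝ)
    (I J ξ η θ : ℕ → Ω → ℕ) (μ0 μ1 : Measure (ℕ × ℕ)) (ν : Measure ℕ) : Prop where
  isProb : IsProbabilityMeasure P
  probμ0 : IsProbabilityMeasure μ0
  probμ1 : IsProbabilityMeasure μ1
  probν : IsProbabilityMeasure ν
  hp : 0 < p ∧ p < 1
  hq : 0 < q ∧ q ≤ 1
  meas : ∀ k, Measurable fun ω => ((I k ω, ξ k ω, η k ω), J k ω, θ k ω)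
  iid : iIndepFun
    (fun k ω => ((I k ω, ξ k ω, η k ω), J k ω, θ k ω)) P
  law : ∀ k, Measure.map (fun ω => ((I k ω, ξ k ω, η k ω), J k ω, θ k ω)) P
      = (mixLaw p μ0 μ1).prod ((bern q).prod ν)
  pos0 : ∀ a b : ℕ, a ≤ 1 → b ≤ 1 → 0 < μ0 {(a, b)}
  pos1 : ∀ a b : ℕ, a ≤ 1 → b ≤ 1 → 0 < μ1 {(a, b)}
  mom0 : Integrable (fun x : ℕ × ℕ => (x.1 : ℝ) ^ 2 + (x.2 : ℝ) ^ 2) μ0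
  mom1 : Integrable (fun x : ℕ × ℕ => (x.1 : ℝ) ^ 2 + (x.2 : ℝ) ^ 2) μ1
  momν : Integrable (fun m : ℕ => (m : ℝ) ^ 2) ν

/-- `τ₁(c)`, the first attempt to reach the half-plane `ℕ₀ × [c, ∞)`:
the first `k ≥ 1` with `T_{k-1} + η_k = η_1 + … + η_k ≥ c`. -/
def tau1 (η : ℕ → Ω → ℕ) (c : ℕ) (ω : Ω) : ℕ :=
  sInf {k | 1 ≤ k ∧ c ≤ ∑ j ∈ Finset.Icc 1 k, η j ω}

/-- `τ₂(c)`, the first entrance of the walk to the horizontal line `ℕ₀ × {c}`. -/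
def tau2 (ξ η θ J : ℕ → Ω → ℕ) (c : ℕ) (ω : Ω) : ℕ :=
  sInf {k | 1 ≤ k ∧ (walk ξ η θ J c k ω).2 = c}

/-!
Before `τ₁` the walk has never been cut off by the capacity, so `T_k = η_1 + ⋯ + η_k < c`
and `τ₁ ≤ τ₂`. After `τ₁ - 1`, every step with `η_k ≥ 1` and `J_k = 1` raises `T` by at least
one until `T = c`, and the gap still to be covered is at most the overshoot `η_{τ₁}`.
By the strong law the climbing steps have a positive density `β` and the partial sums of `η`
grow linearly, so `τ₁ = O(c)`, `η_{τ₁} = o(c)`, and a window of length `ε c` after `τ₁ - 1`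
contains `β ε c - o(c)` climbing steps; hence `τ₂ - τ₁ ≤ ε c` for all large `c`.
-/

lemma exists_abs_sub_mul_le_of_tendsto_div {u : ℕ → ℝ} {L : ℝ}
    (hu : Tendsto (fun n : ℕ => u n / n) atTop (𝓝 L)) {δ : ℝ} (hδ : 0 < δ) :
    ∃ C, 0 ≤ C ∧ ∀ n : ℕ, |u n - L * n| ≤ δ * n + C := by
  obtain ⟨N, hN⟩ := Metric.tendsto_atTop.1 hu δ hδ
  refine ⟨∑ k ∈ range (N + 1), |u k - L * k|, sum_nonneg fun _ _ => abs_nonneg _, fun n => ?_⟩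
  have hδn : 0 ≤ δ * n := by positivity
  rcases le_or_gt n N with hn | hn
  · have := single_le_sum (f := fun k => |u k - L * k|) (fun _ _ => abs_nonneg _)
      (mem_range.2 (Nat.lt_succ_of_le hn))
    linarith
  · have hn0 : (0 : ℝ) < n := by exact_mod_cast (show 0 < n by omega)
    have hdist : |u n / n - L| < δ := by simpa [Real.dist_eq] using hN n hn.le
    have hscale : u n - L * n = n * (u n / n - L) := by field_simp
    have hC : 0 ≤ ∑ k ∈ range (N + 1), |u k - L * k| := sum_nonneg fun _ _ => abs_nonneg _
    rw [hscale, abs_mul, abs_of_pos hn0]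
    nlinarith

lemma ae_tendsto_sum_Icc_comp_div {Ω α : Type*} [MeasurableSpace Ω] [MeasurableSpace α]
    {P : Measure Ω} {Z : ℕ → Ω → α} (hZ : ∀ k, Measurable (Z k))
    (hindep : Pairwise fun i j => IndepFun (Z i) (Z j) P) {Λ : Measure α}
    (hlaw : ∀ k, P.map (Z k) = Λ)
    {f : α → ℝ} (hf : Measurable f) (hfi : Integrable f Λ) :
    ∀ᵐ ω ∂P, Tendsto (fun n : ℕ => (∑ k ∈ Icc 1 n, f (Z k ω)) / n) atTop
      (𝓝 (∫ x, f x ∂Λ)) := by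
  set X : ℕ → Ω → ℝ := fun i ω => f (Z (i + 1) ω)
  have hint : Integrable (X 0) P :=
    (integrable_map_measure hf.aestronglyMeasurable (hZ 1).aemeasurable).1 (hlaw 1 ▸ hfi)
  have hident : ∀ i, IdentDistrib (X i) (X 0) P P := fun i =>
    (IdentDistrib.mk (hZ _).aemeasurable (hZ _).aemeasurable (by rw [hlaw, hlaw])).comp hf
  have hX : Pairwise fun i j => IndepFun (X i) (X j) P := fun i j hij =>
    (hindep (by simpa using hij)).comp hf hf
  have hmean : P[X 0] = ∫ x, f x ∂Λ := by
    rw [← hlaw 1, integral_map (hZ 1).aemeasurable hf.aestronglyMeasurable]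
  filter_upwards [strong_law_ae_real X hint hX hident] with ω hω
  rw [hmean] at hω
  refine hω.congr fun n => ?_
  rw [range_eq_Ico, sum_Ico_add' (fun k => f (Z k ω)) 0 n 1]
  rfl

/-- Each step counted here raises `T` by at least one unless `T` has already reached the
capacity. -/
def climbCount (η J : ℕ → Ω → ℕ) (ω : Ω) (n : ℕ) : ℕ :=
  ∑ k ∈ Icc 1 n, if 1 ≤ η k ω ∧ J k ω = 1 then 1 else 0

lemma climbCount_succ (η J : ℕ → Ω → ℕ) (ω : Ω) (n : ℕ) :
    climbCount η J ω (n + 1) =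
      climbCount η J ω n + if 1 ≤ η (n + 1) ω ∧ J (n + 1) ω = 1 then 1 else 0 :=
  sum_Icc_succ_top (by omega) _

lemma climbCount_le_sum (η J : ℕ → Ω → ℕ) (ω : Ω) (n : ℕ) :
    climbCount η J ω n ≤ ∑ k ∈ Icc 1 n, η k ω :=
  sum_le_sum fun k _ => by split_ifs with h <;> omega

section Walk

variable (ξ η θ J : ℕ → Ω → ℕ) (c : ℕ) (ω : Ω)

lemma walk_snd_le : ∀ k, (walk ξ η θ J c k ω).2 ≤ c
  | 0 => Nat.zero_le c
  | k + 1 => by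
    have := walk_snd_le k
    simp only [walk]
    split_ifs <;> omega

lemma walk_snd_eq_or_add_le_succ (k : ℕ) :
    (walk ξ η θ J c (k + 1) ω).2 = c ∨
      (walk ξ η θ J c k ω).2 + (if 1 ≤ η (k + 1) ω ∧ J (k + 1) ω = 1 then 1 else 0) ≤
        (walk ξ η θ J c (k + 1) ω).2 := by
  have := walk_snd_le ξ η θ J c ω k
  simp only [walk]
  split_ifs <;> omega

lemma walk_snd_eq_or_add_climbCount_le (t : ℕ) :
    ∀ m, (walk ξ η θ J c (t + m) ω).2 = c ∨
      (walk ξ η θ J c t ω).2 + climbCount η J ω (t + m) ≤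
        (walk ξ η θ J c (t + m) ω).2 + climbCount η J ω t
  | 0 => Or.inr le_rfl
  | m + 1 => by
    rw [← add_assoc]
    have := walk_snd_le ξ η θ J c ω (t + m + 1)
    have := climbCount_succ η J ω (t + m)
    rcases walk_snd_eq_or_add_climbCount_le t m with h | h <;>
      rcases walk_snd_eq_or_add_le_succ ξ η θ J c ω (t + m) with h' | h' <;> omega

lemma walk_snd_eq_sum_of_lt : ∀ k, ∑ j ∈ Icc 1 k, η j ω < c →
    (walk ξ η θ J c k ω).2 = ∑ j ∈ Icc 1 k, η j ω
  | 0, _ => rfl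
  | k + 1, h => by
    rw [sum_Icc_succ_top (by omega)] at h ⊢
    have ih := walk_snd_eq_sum_of_lt k (by omega)
    simp only [walk]
    rw [if_neg (by omega), if_pos (by omega), ih]

lemma sum_lt_of_lt_tau1 (hc : 0 < c) {k : ℕ} (hk : k < tau1 η c ω) :
    ∑ j ∈ Icc 1 k, η j ω < c := by
  rcases Nat.eq_zero_or_pos k with rfl | hk0
  · simpa using hc
  · have : ¬(1 ≤ k ∧ c ≤ ∑ j ∈ Icc 1 k, η j ω) := Nat.notMem_of_lt_sInf hk
    omega

lemma tau1_le_tau2 (hc : 0 < c) {k : ℕ} (hk : 1 ≤ k) (hTk : (walk ξ η θ J c k ω).2 = c) :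
    tau1 η c ω ≤ tau2 ξ η θ J c ω := by
  obtain ⟨-, hT2⟩ : 1 ≤ tau2 ξ η θ J c ω ∧ (walk ξ η θ J c (tau2 ξ η θ J c ω) ω).2 = c :=
    Nat.sInf_mem (s := {k | 1 ≤ k ∧ (walk ξ η θ J c k ω).2 = c}) ⟨k, hk, hTk⟩
  by_contra! hlt
  have hS := sum_lt_of_lt_tau1 η c ω hc hlt
  have := walk_snd_eq_sum_of_lt ξ η θ J c ω _ hS
  omega

lemma tau2_le_of_eta_add_climbCount_le (hc : 0 < c) {t M : ℕ} (ht : tau1 η c ω = t + 1)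
    (hclimb : η (t + 1) ω + climbCount η J ω t ≤ climbCount η J ω (t + M)) :
    tau1 η c ω ≤ tau2 ξ η θ J c ω ∧ tau2 ξ η θ J c ω ≤ t + M := by
  have hSt := sum_lt_of_lt_tau1 η c ω hc (k := t) (by omega)
  have hTt := walk_snd_eq_sum_of_lt ξ η θ J c ω t hSt
  obtain ⟨-, hc_le⟩ : 1 ≤ tau1 η c ω ∧ c ≤ ∑ j ∈ Icc 1 (tau1 η c ω), η j ω :=
    Nat.sInf_mem (Nat.nonempty_of_pos_sInf (show 0 < tau1 η c ω by omega))
  rw [ht, sum_Icc_succ_top (by omega)] at hc_le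
  have hle := walk_snd_le ξ η θ J c ω (t + M)
  have hT : (walk ξ η θ J c (t + M) ω).2 = c := by
    rcases walk_snd_eq_or_add_climbCount_le ξ η θ J c ω t M with h | h
    · exact h
    · omega
  have hM : 1 ≤ t + M := by
    rcases Nat.eq_zero_or_pos M with rfl | hM
    · rw [add_zero] at hT
      omega
    · omega
  exact ⟨tau1_le_tau2 ξ η θ J c ω hc hM hT, Nat.sInf_le ⟨hM, hT⟩⟩

end Walk

section Asymptotics

variable {ξ η θ J : ℕ → Ω → ℕ} {ω : Ω} {β : ℝ}

lemma exists_tau1_le_mul_add (hβ : 0 < β)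
    (hclimb : Tendsto (fun n : ℕ => (climbCount η J ω n : ℝ) / n) atTop (𝓝 β)) :
    ∃ A B : ℝ, 0 ≤ A ∧ ∀ c : ℕ, 1 ≤ tau1 η c ω ∧ (tau1 η c ω : ℝ) ≤ A * c + B := by
  obtain ⟨C, hC0, hC⟩ := exists_abs_sub_mul_le_of_tendsto_div hclimb (half_pos hβ)
  refine ⟨2 / β, 2 * C / β + 2, by positivity, fun c => ?_⟩
  set k := ⌈2 * (c + C) / β⌉₊ + 1
  have hk : (k : ℝ) < 2 * (c + C) / β + 2 := by
    have := Nat.ceil_lt_add_one (show 0 ≤ 2 * (c + C) / β by positivity)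
    push_cast [k]
    linarith
  have hck : (c : ℝ) ≤ climbCount η J ω k := by
    have hk' : 2 * (c + C) / β ≤ k := by
      push_cast [k]
      linarith [Nat.le_ceil (2 * (c + C) / β)]
    rw [div_le_iff₀ hβ] at hk'
    linarith [(abs_le.1 (hC k)).1]
  have hmem : 1 ≤ k ∧ c ≤ ∑ j ∈ Icc 1 k, η j ω :=
    ⟨by omega, (show c ≤ climbCount η J ω k by exact_mod_cast hck).trans
      (climbCount_le_sum η J ω k)⟩
  refine ⟨(Nat.sInf_mem (s := {k | 1 ≤ k ∧ c ≤ ∑ j ∈ Icc 1 k, η j ω}) ⟨k, hmem⟩).1, ?_⟩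
  calc (tau1 η c ω : ℝ) ≤ k := by exact_mod_cast Nat.sInf_le hmem
    _ ≤ 2 * (c + C) / β + 2 := hk.le
    _ = 2 / β * c + (2 * C / β + 2) := by ring

lemma eta_add_climbCount_le_of_abs_le {δ C₁ C₂ m : ℝ}
    (hC₁ : ∀ n : ℕ, |(climbCount η J ω n : ℝ) - β * n| ≤ δ * n + C₁)
    (hC₂ : ∀ n : ℕ, |∑ k ∈ Icc 1 n, (η k ω : ℝ) - m * n| ≤ δ * n + C₂) {t M : ℕ}
    (h : δ * (4 * t + M + 1) + m + 2 * C₁ + 2 * C₂ ≤ β * M) :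
    η (t + 1) ω + climbCount η J ω t ≤ climbCount η J ω (t + M) := by
  have hηt : (η (t + 1) ω : ℝ) =
      ∑ k ∈ Icc 1 (t + 1), (η k ω : ℝ) - ∑ k ∈ Icc 1 t, (η k ω : ℝ) := by
    rw [sum_Icc_succ_top (by omega)]
    ring
  have h₁ := (abs_le.1 (hC₁ (t + M))).1
  have h₂ := (abs_le.1 (hC₁ t)).2
  have h₃ := (abs_le.1 (hC₂ (t + 1))).2
  have h₄ := (abs_le.1 (hC₂ t)).1
  push_cast at h₁ h₃
  exact_mod_cast (show (η (t + 1) ω : ℝ) + climbCount η J ω t ≤ climbCount η J ω (t + M) by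
    linarith)

lemma eventually_tau2_le_tau1_add (hβ : 0 < β)
    (hclimb : Tendsto (fun n : ℕ => (climbCount η J ω n : ℝ) / n) atTop (𝓝 β)) {m : ℝ}
    (hη : Tendsto (fun n : ℕ => (∑ k ∈ Icc 1 n, (η k ω : ℝ)) / n) atTop (𝓝 m))
    {ε : ℝ} (hε : 0 < ε) :
    ∀ᶠ c : ℕ in atTop, tau1 η c ω ≤ tau2 ξ η θ J c ω ∧
      (tau2 ξ η θ J c ω : ℝ) ≤ tau1 η c ω + ε * c := by
  obtain ⟨A, B, hA, hAB⟩ := exists_tau1_le_mul_add hβ hclimb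
  -- with this `δ`, the errors `δ (4 t + M)` of the linear bounds below eat at most half of the
  -- `β M ≈ β ε c` climbing steps of the window
  set δ := β * ε / (2 * (4 * A + ε))
  have hδ : 0 < δ := by positivity
  have hδA : δ * (4 * A + ε) = β * ε / 2 := by
    simp only [δ]
    field_simp
  obtain ⟨C1, -, hC1⟩ := exists_abs_sub_mul_le_of_tendsto_div hclimb hδ
  obtain ⟨C2, -, hC2⟩ := exists_abs_sub_mul_le_of_tendsto_div hη hδ
  set D := δ * (4 * B + 2) + m + 2 * C1 + 2 * C2
  filter_upwards [eventually_gt_atTop 0,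
    tendsto_natCast_atTop_atTop.eventually_ge_atTop (2 * D / (β * ε))] with c hc hcD
  obtain ⟨h1, hτ1⟩ := hAB c
  obtain ⟨t, ht⟩ : ∃ t, tau1 η c ω = t + 1 := ⟨_, (Nat.succ_pred_eq_of_pos h1).symm⟩
  set M := ⌈ε * c⌉₊
  have hM : ε * c ≤ M := Nat.le_ceil _
  have hM' : (M : ℝ) < ε * c + 1 := Nat.ceil_lt_add_one (by positivity)
  have hδt := mul_le_mul_of_nonneg_left (show (t : ℝ) ≤ A * c + B - 1 by
    have : ((t + 1 : ℕ) : ℝ) ≤ A * c + B := ht ▸ hτ1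
    push_cast at this
    linarith) hδ.le
  have hδM := mul_le_mul_of_nonneg_left hM'.le hδ.le
  have hβM := mul_le_mul_of_nonneg_left hM hβ.le
  have hδAc : δ * (4 * A + ε) * c = β * ε / 2 * c := by rw [hδA]
  rw [div_le_iff₀ (by positivity)] at hcD
  have hclimbM := eta_add_climbCount_le_of_abs_le hC1 hC2 (t := t) (M := M) (by
    simp only [D] at hcD
    linarith)
  obtain ⟨h12, h2⟩ := tau2_le_of_eta_add_climbCount_le ξ η θ J c ω hc ht hclimbM
  refine ⟨h12, ?_⟩
  have : (tau2 ξ η θ J c ω : ℝ) ≤ t + M := by exact_mod_cast h2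
  rw [ht]
  push_cast
  linarith

theorem tendsto_tau2_sub_tau1_div (hβ : 0 < β)
    (hclimb : Tendsto (fun n : ℕ => (climbCount η J ω n : ℝ) / n) atTop (𝓝 β)) {m : ℝ}
    (hη : Tendsto (fun n : ℕ => (∑ k ∈ Icc 1 n, (η k ω : ℝ)) / n) atTop (𝓝 m)) :
    Tendsto (fun c : ℕ => ((tau2 ξ η θ J c ω : ℝ) - tau1 η c ω) / c) atTop (𝓝 0) := by
  refine Metric.tendsto_nhds.2 fun ε hε => ?_
  filter_upwards [eventually_tau2_le_tau1_add (ξ := ξ) (θ := θ) hβ hclimb hη (half_pos hε),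
    eventually_gt_atTop 0] with c ⟨h12, h2⟩ hc
  have hc' : (0 : ℝ) < c := by exact_mod_cast hc
  have h12' : (tau1 η c ω : ℝ) ≤ tau2 ξ η θ J c ω := by exact_mod_cast h12
  rw [Real.dist_eq, sub_zero, abs_of_nonneg (div_nonneg (by linarith) hc'.le),
    div_lt_iff₀ hc']
  nlinarith

end Asymptotics

instance (r : ℝ) : IsFiniteMeasure (bern r) :=
  ⟨by simp [bern, ENNReal.add_lt_top]⟩

instance (p : ℝ) (μ0 μ1 : Measure (ℕ × ℕ)) [IsFiniteMeasure μ0] [IsFiniteMeasure μ1] :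
    IsFiniteMeasure (mixLaw p μ0 μ1) :=
  ⟨by simp [mixLaw, ENNReal.add_lt_top, ENNReal.mul_lt_top, measure_lt_top]⟩

lemma bern_singleton_one (r : ℝ) : bern r {1} = ENNReal.ofReal r := by
  simp [bern]

lemma mixLaw_singleton_one_pos {p : ℝ} (hp : 0 < p) (μ0 : Measure (ℕ × ℕ))
    {μ1 : Measure (ℕ × ℕ)} [SFinite μ1] {a : ℕ × ℕ} (ha : 0 < μ1 {a}) :
    0 < mixLaw p μ0 μ1 {(1, a)} := by
  have h1 : 0 < ENNReal.ofReal p * (Measure.dirac 1).prod μ1 {(1, a)} := by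
    rw [← Set.singleton_prod_singleton, Measure.prod_prod]
    simpa [hp] using ha
  exact h1.trans_le (by simp [mixLaw])

lemma integrable_natCast_snd_of_integrable_sq {μ : Measure (ℕ × ℕ)}
    (hμ : Integrable (fun x : ℕ × ℕ => (x.1 : ℝ) ^ 2 + (x.2 : ℝ) ^ 2) μ) :
    Integrable (fun x : ℕ × ℕ => (x.2 : ℝ)) μ := by
  refine hμ.mono' (measurable_of_countable _).aestronglyMeasurable (ae_of_all _ fun x => ?_)
  have : (x.2 : ℝ) ≤ (x.2 : ℝ) ^ 2 := by exact_mod_cast Nat.le_self_pow two_ne_zero x.2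
  rw [Real.norm_natCast]
  nlinarith

lemma integrable_natCast_snd_snd_mixLaw (p : ℝ) {μ0 μ1 : Measure (ℕ × ℕ)}
    (h0 : Integrable (fun x : ℕ × ℕ => (x.2 : ℝ)) μ0)
    (h1 : Integrable (fun x : ℕ × ℕ => (x.2 : ℝ)) μ1) :
    Integrable (fun y : ℕ × ℕ × ℕ => (y.2.2 : ℝ)) (mixLaw p μ0 μ1) :=
  ((h1.comp_snd _).smul_measure ENNReal.ofReal_ne_top).add_measure
    ((h0.comp_snd _).smul_measure ENNReal.ofReal_ne_top)

namespace IsModel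

variable {Ω : Type*} [MeasurableSpace Ω] {P : Measure Ω} {p q : ℝ} {I J ξ η θ : ℕ → Ω → ℕ}
  {μ0 μ1 : Measure (ℕ × ℕ)} {ν : Measure ℕ}

lemma ae_tendsto_sum_Icc_div (hM : IsModel P p q I J ξ η θ μ0 μ1 ν)
    {f : (ℕ × ℕ × ℕ) × ℕ × ℕ → ℝ} (hf : Integrable f ((mixLaw p μ0 μ1).prod ((bern q).prod ν))) :
    ∀ᵐ ω ∂P, Tendsto (fun n : ℕ =>
        (∑ k ∈ Icc 1 n, f ((I k ω, ξ k ω, η k ω), J k ω, θ k ω)) / n) atTop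
      (𝓝 (∫ x, f x ∂(mixLaw p μ0 μ1).prod ((bern q).prod ν))) :=
  ae_tendsto_sum_Icc_comp_div hM.meas (fun _ _ hij => hM.iid.indepFun hij) hM.law
    (measurable_of_countable f) hf

lemma exists_ae_tendsto_climbCount (hM : IsModel P p q I J ξ η θ μ0 μ1 ν) :
    ∃ β > 0, ∀ᵐ ω ∂P, Tendsto (fun n : ℕ => (climbCount η J ω n : ℝ) / n) atTop (𝓝 β) := by
  have := hM.probμ0
  have := hM.probμ1
  have := hM.probν
  set s : Set ((ℕ × ℕ × ℕ) × ℕ × ℕ) := {x | 1 ≤ x.1.2.2 ∧ x.2.1 = 1}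
  set Λ := (mixLaw p μ0 μ1).prod ((bern q).prod ν)
  have hs : MeasurableSet s := (Set.to_countable s).measurableSet
  have hΛs : 0 < Λ s := by
    have hsub : {(1, 1, 1)} ×ˢ ({1} ×ˢ Set.univ) ⊆ s := by
      rintro ⟨⟨_, _, _⟩, _, _⟩ ⟨hx, hj, -⟩
      simp_all [s]
    refine lt_of_lt_of_le ?_ (measure_mono hsub)
    rw [Measure.prod_prod, Measure.prod_prod, bern_singleton_one, measure_univ, mul_one]
    exact ENNReal.mul_pos (mixLaw_singleton_one_pos hM.hp.1 μ0 (hM.pos1 1 1 le_rfl le_rfl)).ne'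
      (by simp [hM.hq.1])
  refine ⟨Λ.real s, ENNReal.toReal_pos hΛs.ne' (measure_ne_top _ _), ?_⟩
  filter_upwards [hM.ae_tendsto_sum_Icc_div (f := s.indicator 1)
    ((integrable_const 1).indicator hs)] with ω hω
  rw [integral_indicator_one hs] at hω
  refine hω.congr fun n => ?_
  simp [climbCount, s, Set.indicator_apply]

lemma exists_ae_tendsto_sum_eta (hM : IsModel P p q I J ξ η θ μ0 μ1 ν) :
    ∃ m, ∀ᵐ ω ∂P, Tendsto (fun n : ℕ => (∑ k ∈ Icc 1 n, (η k ω : ℝ)) / n) atTop (𝓝 m) := by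
  have := hM.probν
  exact ⟨_, hM.ae_tendsto_sum_Icc_div (f := fun x => (x.1.2.2 : ℝ))
    ((integrable_natCast_snd_snd_mixLaw p (integrable_natCast_snd_of_integrable_sq hM.mom0)
      (integrable_natCast_snd_of_integrable_sq hM.mom1)).comp_fst _)⟩

end IsModel

theorem tau_difference_tendsto_zero_almost_surely_general
    {Ω : Type*} [MeasurableSpace Ω] (P : Measure Ω) (p q : ℝ)
    (I J ξ η θ : ℕ → Ω → ℕ) (μ0 μ1 : Measure (ℕ × ℕ)) (ν : Measure ℕ)
    (hM : IsModel P p q I J ξ η θ μ0 μ1 ν)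
    (c : ℕ → ℕ) (hunbdd : Tendsto c atTop atTop) :
    ∀ᵐ ω ∂P,
      Tendsto (fun n : ℕ =>
          ((tau2 ξ η θ J (c n) ω : ℝ) - (tau1 η (c n) ω : ℝ)) / (c n : ℝ))
        atTop (𝓝 0) := by
  obtain ⟨β, hβ, hclimb⟩ := hM.exists_ae_tendsto_climbCount
  obtain ⟨m, hη⟩ := hM.exists_ae_tendsto_sum_eta
  filter_upwards [hclimb, hη] with ω hω₁ hω₂
  exact (tendsto_tau2_sub_tau1_div hβ hω₁ hω₂).comp hunbdd

/-- **Lemma 2 (almost sure closeness of `τ₁` and `τ₂` on the `c_n`-scale).**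
Under the model assumptions (A1)–(A5) (with `q > 0`), if `(c_n)` is nondecreasing and
unbounded, then `(τ₂(n) - τ₁(n))/c_n → 0` almost surely. -/
theorem tau_difference_tendsto_zero_almost_surely
    {Ω : Type*} [MeasurableSpace Ω] (P : Measure Ω) (p q : ℝ)
    (I J ξ η θ : ℕ → Ω → ℕ) (μ0 μ1 : Measure (ℕ × ℕ)) (ν : Measure ℕ)
    (hM : IsModel P p q I J ξ η θ μ0 μ1 ν)
    (c : ℕ → ℕ) (hcpos : ∀ n, 0 < c n) (hmono : Monotone c)
    (hunbdd : Tendsto c atTop atTop) :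
    ∀ᵐ ω ∂P,
      Tendsto (fun n : ℕ =>
          ((tau2 ξ η θ J (c n) ω : ℝ) - (tau1 η (c n) ω : ℝ)) / (c n : ℝ))
        atTop (𝓝 0) :=
  tau_difference_tendsto_zero_almost_surely_general P p q I J ξ η θ μ0 μ1 ν hM c hunbdd

end ABTest
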